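/- arXiv:2211.08807 — 3 statements merged into one kernel-verified Lean document; each statement's English description precedes it below -/
import Mathlib

section
/- Define on the space L = g((x)) × g[x]/x^n g[x] (for g a simple Lie algebra with Killing form κ, n ≥ 0, and a Laurent series α(x) = x^{-n} + α_{n-2}x^{-n+1} + ⋯) the bilinear form B(a⊗(f,[p]), b⊗(g,[q])) = κ(a,b)·res_0(α·(fg − pq)). Then B is symmetric, invariant, and the diagonal Δ = {(f,[f]) : f ∈ g[[x]]} is isotropic with respect to B: B(u,v) = 0 for all u,v ∈ Δ. -/
noncomputable section ManinCore

open scoped BigOperators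
open HahnSeries

variable {F : Type} [Field F] {g : Type} [LieRing g] [LieAlgebra F g] {d n : ℕ}

/-- A Lie ring viewed as a non-unital non-associative semiring with `*` given by the bracket. -/
@[reducible]
def lieMulStruct (g : Type) [LieRing g] : NonUnitalNonAssocSemiring g :=
  { (inferInstance : AddCommMonoid g) with
    mul := fun a b => ⁅a, b⁆
    left_distrib := fun a b c => lie_add a b c
    right_distrib := fun a b c => add_lie a b c
    zero_mul := zero_lie
    mul_zero := lie_zero }

/-- Convolution Lie bracket on `g`-valued formal (Hahn/Laurent) series `g((x))`. -/
def bracketLau (u v : HahnSeries ℤ g) : HahnSeries ℤ g :=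
  letI := lieMulStruct g
  u * v

/-- The truncated Lie bracket on `g[x]/x^n g[x]`, represented as `Fin n → g`. -/
def bracketTr (p q : Fin n → g) : Fin n → g :=
  fun m => ∑ i : Fin n, ∑ j : Fin n, if (i : ℕ) + (j : ℕ) = (m : ℕ) then ⁅p i, q j⁆ else 0

/-- The Lie algebra `L(n,α) = g((x)) × g[x]/x^n g[x]` (as an `F`-module). -/
abbrev LL (g : Type) [AddCommGroup g] (n : ℕ) := HahnSeries ℤ g × (Fin n → g)

/-- Componentwise bracket on `L(n,α)`. -/
def bracketLL (z w : LL g n) : LL g n := (bracketLau z.1 w.1, bracketTr z.2 w.2)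

variable (F g n) in
/-- The diagonal `Δ = {(f,[f]) | f ∈ g[[x]]} ⊆ L(n,α)`. -/
def Delta [Module F g] : Submodule F (LL g n) where
  carrier := {z | (∀ k : ℤ, k < 0 → z.1.coeff k = 0) ∧ ∀ m : Fin n, z.2 m = z.1.coeff (m : ℤ)}
  add_mem' := by
    rintro a b ⟨ha1, ha2⟩ ⟨hb1, hb2⟩
    refine ⟨fun k hk => ?_, fun m => ?_⟩
    · simp [HahnSeries.coeff_add, ha1 k hk, hb1 k hk]
    · simp [HahnSeries.coeff_add, ha2 m, hb2 m]
  zero_mem' := by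
    exact ⟨fun k _ => rfl, fun m => rfl⟩
  smul_mem' := by
    rintro c a ⟨ha1, ha2⟩
    refine ⟨fun k hk => ?_, fun m => ?_⟩
    · simp [HahnSeries.coeff_smul, ha1 k hk]
    · simp [HahnSeries.coeff_smul, ha2 m]

/-- Residue-type bilinear pairing on the Laurent part: `res₀(α·κ(u,v))`. -/
def BLau (κ : g →ₗ[F] g →ₗ[F] F) (α : LaurentSeries F) (u v : HahnSeries ℤ g) : F :=
  ∑ᶠ (i : ℤ) (j : ℤ), α.coeff i * κ (u.coeff j) (v.coeff (-1 - i - j))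

/-- Pairing on the truncated part: `res₀(α·κ(p,q))`. -/
def BTr (κ : g →ₗ[F] g →ₗ[F] F) (α : LaurentSeries F) (p q : Fin n → g) : F :=
  ∑ i : Fin n, ∑ j : Fin n, α.coeff (-1 - (i : ℕ) - (j : ℕ)) * κ (p i) (q j)

/-- The bilinear form `B` on `L(n,α)`: `B((f,p),(g,q)) = res₀(α(fg − pq))` (κ-valued). -/
def BB (κ : g →ₗ[F] g →ₗ[F] F) (α : LaurentSeries F) (z w : LL g n) : F :=
  BLau κ α z.1 w.1 - BTr κ α z.2 w.2

variable (g n) in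
/-- The elements `w_{k,i}` from the expansion of `y^nΩ/(x-y)` in `(L(n,α) ⊗ g)[[y]]`. -/
def wElt (b : Fin d → g) (k : ℕ) (i : Fin d) : LL g n :=
  if k < n then (0, fun m => if (m : ℕ) = n - 1 - k then -(b i) else 0)
  else (HahnSeries.single ((n : ℤ) - 1 - k) (b i), 0)

/-- Multiplication of a `g`-valued Laurent series by a scalar power series. -/
def psSmulLau (s : PowerSeries F) (u : HahnSeries ℤ g) : HahnSeries ℤ g :=
  (HahnModule.of F).symm ((HahnSeries.ofPowerSeries ℤ F s) • (HahnModule.of F u))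

/-- Multiplication of a truncated polynomial by a power series. -/
def psSmulTr (s : PowerSeries F) (p : Fin n → g) : Fin n → g :=
  fun m => ∑ j : Fin n, if (j : ℕ) ≤ (m : ℕ) then (PowerSeries.coeff ((m : ℕ) - j)) s • p j else 0

/-- Componentwise multiplication of an element of `L(n,α)` by a power series. -/
def psSmulLL (s : PowerSeries F) (z : LL g n) : LL g n := (psSmulLau s z.1, psSmulTr s z.2)

/-- The diagonal monomial `b_i(y^k, [y^k]) ∈ Δ ⊆ L(n,α)`. -/
def diagMono (b : Fin d → g) (k : ℕ) (i : Fin d) : LL g n :=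
  (HahnSeries.single (k : ℤ) (b i), fun m => if (m : ℕ) = k then b i else 0)

/-- The `g`-valued Hahn series with coefficients `γ : ℕ → g` in nonnegative degrees. -/
def ofNatCoeff (γ : ℕ → g) : HahnSeries ℤ g :=
  HahnSeries.embDomain Nat.castOrderEmbedding
    ⟨γ, Set.IsWF.isPWO ((wellFounded_lt).wellFoundedOn :
      (Function.support γ).WellFoundedOn (· < ·))⟩

/-- The diagonal element of `L(n,α)` corresponding to a formal power series with
basis coefficients `γ : ℕ → Fin d → F` (i.e. `∑ γ ℓ j • b_j x^ℓ`). -/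
def diagOf [Module F g] (b : Fin d → g) (γ : ℕ → Fin d → F) : LL g n :=
  (ofNatCoeff (fun ℓ => ∑ j, γ ℓ j • b j), fun m => ∑ j, γ (m : ℕ) j • b j)

/-!
Everything is a residue pairing. Since all series involved are bounded below,
`BLau κ α u v = res₀ (α · κ(u, v))` is a finite sum; hence it is biadditive, symmetric if `κ` is,
and invariant if `κ` is, by reindexing the triple sum over `a + b + c = -1 - i`.
The truncated pairing is the same residue pairing on the representatives of degree `< n`,
and the truncated bracket differs from the bracket of the representatives by an element of
`xⁿ g[[x]]`. As `α ∈ x⁻ⁿ F[[x]]`, the pairing of an element of `xⁿ g[[x]]` with one of `g[[x]]`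
has zero residue. This transfers invariance to the truncated part, and for
`(f, [f]), (h, [h]) ∈ Δ` it identifies `res₀ (α κ(f, h))` with the truncated pairing.
-/

section LaurentPairing

variable (κ : g →ₗ[F] g →ₗ[F] F) (α : LaurentSeries F)

lemma BLau_eq_sum_Icc {u v : HahnSeries ℤ g} {lα lu lv : ℤ}
    (hα : ∀ k < lα, α.coeff k = 0) (hu : ∀ k < lu, u.coeff k = 0)
    (hv : ∀ k < lv, v.coeff k = 0) :
    BLau κ α u v = ∑ i ∈ Finset.Icc lα (-1 - lu - lv), ∑ j ∈ Finset.Icc lu (-1 - i - lv),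
      α.coeff i * κ (u.coeff j) (v.coeff (-1 - i - j)) := by
  unfold BLau
  rw [finsum_eq_sum_of_support_subset]
  · refine Finset.sum_congr rfl fun i _ => finsum_eq_sum_of_support_subset _ fun j hj => ?_
    simp only [Function.mem_support, Finset.coe_Icc, Set.mem_Icc] at hj ⊢
    by_contra h
    rcases not_and_or.mp h with h | h
    · exact hj (by rw [hu j (by omega), map_zero, LinearMap.zero_apply, mul_zero])
    · exact hj (by rw [hv _ (by omega), map_zero, mul_zero])
  · intro i hi
    simp only [Function.mem_support, Finset.coe_Icc, Set.mem_Icc] at hi ⊢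
    by_contra h
    refine hi (finsum_eq_zero_of_forall_eq_zero fun j => ?_)
    rcases not_and_or.mp h with h | h
    · rw [hα i (by omega), zero_mul]
    · rcases lt_or_ge j lu with hj | hj
      · rw [hu j hj, map_zero, LinearMap.zero_apply, mul_zero]
      · rw [hv _ (by omega), map_zero, mul_zero]

lemma BLau_eq_zero_of_nonneg {u v : HahnSeries ℤ g} {lα lu lv : ℤ}
    (hα : ∀ k < lα, α.coeff k = 0) (hu : ∀ k < lu, u.coeff k = 0)
    (hv : ∀ k < lv, v.coeff k = 0) (h : 0 ≤ lα + lu + lv) :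
    BLau κ α u v = 0 := by
  rw [BLau_eq_sum_Icc κ α hα hu hv, Finset.Icc_eq_empty (by omega), Finset.sum_empty]

lemma BLau_add_left (u u' v : HahnSeries ℤ g) :
    BLau κ α (u + u') v = BLau κ α u v + BLau κ α u' v := by
  have hα (k) (hk : k < α.order) := coeff_eq_zero_of_lt_order hk
  have hv (k) (hk : k < v.order) := coeff_eq_zero_of_lt_order hk
  have hu (k) (hk : k < min u.order u'.order) : u.coeff k = 0 :=
    coeff_eq_zero_of_lt_order (lt_min_iff.mp hk).1
  have hu' (k) (hk : k < min u.order u'.order) : u'.coeff k = 0 :=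
    coeff_eq_zero_of_lt_order (lt_min_iff.mp hk).2
  have huu' (k) (hk : k < min u.order u'.order) : (u + u').coeff k = 0 := by
    rw [coeff_add, hu k hk, hu' k hk, add_zero]
  simp only [BLau_eq_sum_Icc κ α hα huu' hv, BLau_eq_sum_Icc κ α hα hu hv,
    BLau_eq_sum_Icc κ α hα hu' hv, coeff_add, map_add, LinearMap.add_apply, mul_add,
    Finset.sum_add_distrib]

lemma BLau_add_right (u v v' : HahnSeries ℤ g) :
    BLau κ α u (v + v') = BLau κ α u v + BLau κ α u v' := by
  have hα (k) (hk : k < α.order) := coeff_eq_zero_of_lt_order hk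
  have hu (k) (hk : k < u.order) := coeff_eq_zero_of_lt_order hk
  have hv (k) (hk : k < min v.order v'.order) : v.coeff k = 0 :=
    coeff_eq_zero_of_lt_order (lt_min_iff.mp hk).1
  have hv' (k) (hk : k < min v.order v'.order) : v'.coeff k = 0 :=
    coeff_eq_zero_of_lt_order (lt_min_iff.mp hk).2
  have hvv' (k) (hk : k < min v.order v'.order) : (v + v').coeff k = 0 := by
    rw [coeff_add, hv k hk, hv' k hk, add_zero]
  simp only [BLau_eq_sum_Icc κ α hα hu hvv', BLau_eq_sum_Icc κ α hα hu hv,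
    BLau_eq_sum_Icc κ α hα hu hv', coeff_add, map_add, mul_add, Finset.sum_add_distrib]

lemma BLau_sum_left {ι : Type*} (s : Finset ι) (u : ι → HahnSeries ℤ g) (v : HahnSeries ℤ g) :
    BLau κ α (∑ i ∈ s, u i) v = ∑ i ∈ s, BLau κ α (u i) v :=
  map_sum (AddMonoidHom.mk' (BLau κ α · v) fun u u' => BLau_add_left κ α u u' v) u s

lemma BLau_sum_right {ι : Type*} (s : Finset ι) (u : HahnSeries ℤ g) (v : ι → HahnSeries ℤ g) :
    BLau κ α u (∑ i ∈ s, v i) = ∑ i ∈ s, BLau κ α u (v i) :=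
  map_sum (AddMonoidHom.mk' (BLau κ α u) (BLau_add_right κ α u)) v s

lemma BLau_eq_of_sub_left {u u' v : HahnSeries ℤ g} {lα ld lv : ℤ}
    (hα : ∀ k < lα, α.coeff k = 0) (hd : ∀ k < ld, (u - u').coeff k = 0)
    (hv : ∀ k < lv, v.coeff k = 0) (h : 0 ≤ lα + ld + lv) :
    BLau κ α u v = BLau κ α u' v := by
  rw [← sub_add_cancel u u', BLau_add_left, BLau_eq_zero_of_nonneg κ α hα hd hv h, zero_add]

lemma BLau_eq_of_sub_right {u v v' : HahnSeries ℤ g} {lα lu ld : ℤ}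
    (hα : ∀ k < lα, α.coeff k = 0) (hu : ∀ k < lu, u.coeff k = 0)
    (hd : ∀ k < ld, (v - v').coeff k = 0) (h : 0 ≤ lα + lu + ld) :
    BLau κ α u v = BLau κ α u v' := by
  rw [← sub_add_cancel v v', BLau_add_right, BLau_eq_zero_of_nonneg κ α hα hu hd h, zero_add]

lemma BLau_single_single (j k : ℤ) (x y : g) :
    BLau κ α (single j x) (single k y) = α.coeff (-1 - j - k) * κ x y := by
  unfold BLau
  rw [finsum_eq_single _ (-1 - j - k), finsum_eq_single _ j]
  · rw [show -1 - (-1 - j - k) - j = k by ring, coeff_single_same, coeff_single_same]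
  · intro j' hj'
    simp [coeff_single_of_ne hj']
  · intro i hi
    refine finsum_eq_zero_of_forall_eq_zero fun j' => ?_
    rcases eq_or_ne j' j with rfl | hj'
    · rw [coeff_single_of_ne (show -1 - i - j' ≠ k by omega), map_zero, mul_zero]
    · rw [coeff_single_of_ne hj', map_zero, LinearMap.zero_apply, mul_zero]

lemma BLau_comm (hκ : ∀ x y : g, κ x y = κ y x) (u v : HahnSeries ℤ g) :
    BLau κ α u v = BLau κ α v u := by
  unfold BLau
  refine finsum_congr fun i => ?_
  rw [← finsum_comp_equiv (Equiv.subLeft (-1 - i))]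
  refine finsum_congr fun j => ?_
  rw [Equiv.subLeft_apply, sub_sub_cancel, hκ]

lemma coeff_bracketLau {u v : HahnSeries ℤ g} {lu lv : ℤ}
    (hu : ∀ k < lu, u.coeff k = 0) (hv : ∀ k < lv, v.coeff k = 0) (j : ℤ) :
    (bracketLau u v).coeff j = ∑ a ∈ Finset.Icc lu (j - lv), ⁅u.coeff a, v.coeff (j - a)⁆ := by
  let := lieMulStruct g
  have hpair : Function.Injective fun a : ℤ => (a, j - a) := fun a b h => (Prod.mk.inj h).1
  change (u * v).coeff j = _
  rw [coeff_mul]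
  change ∑ ab ∈ _, ⁅u.coeff (ab : ℤ × ℤ).1, v.coeff ab.2⁆ = _
  refine (Finset.sum_subset ?_ ?_).trans
    (Finset.sum_map _ ⟨_, hpair⟩ fun ab : ℤ × ℤ => ⁅u.coeff ab.1, v.coeff ab.2⁆)
  · rintro ⟨a, b⟩ hab
    obtain ⟨ha, hb, rfl⟩ := Finset.mem_antidiagonal.mp hab
    have ha' : lu ≤ a := not_lt.mp fun h => ha (hu a h)
    have hb' : lv ≤ b := not_lt.mp fun h => hb (hv b h)
    simp only [Finset.mem_map, Finset.mem_Icc, Function.Embedding.coeFn_mk, Prod.mk.injEq]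
    exact ⟨a, ⟨ha', by omega⟩, rfl, by ring⟩
  · rintro _ hab hnot
    obtain ⟨a, -, rfl⟩ := Finset.mem_map.mp hab
    by_contra hne
    have ha : u.coeff a ≠ 0 := fun h => hne (by simp [h])
    have hb : v.coeff (j - a) ≠ 0 := fun h => hne (by simp [h])
    exact hnot (Finset.mem_antidiagonal.mpr ⟨ha, hb, by simp⟩)

lemma coeff_bracketLau_eq_zero_of_lt {u v : HahnSeries ℤ g} {lu lv : ℤ}
    (hu : ∀ k < lu, u.coeff k = 0) (hv : ∀ k < lv, v.coeff k = 0) :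
    ∀ k < lu + lv, (bracketLau u v).coeff k = 0 := fun k hk => by
  rw [coeff_bracketLau hu hv, Finset.Icc_eq_empty (by omega), Finset.sum_empty]

lemma BLau_bracketLau (hκ : ∀ x y z : g, κ ⁅x, y⁆ z = κ x ⁅y, z⁆) (u v w : HahnSeries ℤ g) :
    BLau κ α (bracketLau u v) w = BLau κ α u (bracketLau v w) := by
  have hα (k) (hk : k < α.order) := coeff_eq_zero_of_lt_order hk
  have hu (k) (hk : k < u.order) := coeff_eq_zero_of_lt_order hk
  have hv (k) (hk : k < v.order) := coeff_eq_zero_of_lt_order hk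
  have hw (k) (hk : k < w.order) := coeff_eq_zero_of_lt_order hk
  rw [BLau_eq_sum_Icc κ α hα (coeff_bracketLau_eq_zero_of_lt hu hv) hw,
    BLau_eq_sum_Icc κ α hα hu (coeff_bracketLau_eq_zero_of_lt hv hw),
    show -1 - (u.order + v.order) - w.order = -1 - u.order - (v.order + w.order) by ring]
  refine Finset.sum_congr rfl fun i _ => ?_
  simp only [coeff_bracketLau hu hv, coeff_bracketLau hv hw, map_sum, LinearMap.coe_sum,
    Finset.sum_apply, Finset.mul_sum, hκ]
  rw [Finset.sum_sigma', Finset.sum_sigma']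
  -- both sides run over `u_a ⊗ v_b ⊗ w_c` with `a + b + c = -1 - i`
  refine Finset.sum_nbij' (fun p => ⟨p.2, p.1 - p.2⟩) (fun p => ⟨p.1 + p.2, p.1⟩)
    ?_ ?_ (fun _ _ => by simp) (fun _ _ => by simp) fun p _ => ?_
  · rintro ⟨j, a⟩ hp
    simp only [Finset.mem_sigma, Finset.mem_Icc] at hp ⊢
    omega
  · rintro ⟨a, b⟩ hp
    simp only [Finset.mem_sigma, Finset.mem_Icc] at hp ⊢
    omega
  · rw [show -1 - i - p.1 = -1 - i - p.2 - (p.1 - p.2) by ring]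

end LaurentPairing

section Truncated

variable (κ : g →ₗ[F] g →ₗ[F] F) (α : LaurentSeries F)

/-- The representative of degree `< n` in `g[x] ⊆ g((x))` of a class in `g[x]/xⁿg[x]`. -/
def liftTr (p : Fin n → g) : HahnSeries ℤ g := ∑ i : Fin n, single (i : ℤ) (p i)

lemma coeff_liftTr (p : Fin n → g) (k : ℤ) :
    (liftTr p).coeff k = ∑ i : Fin n, if k = i then p i else 0 := by
  simp only [liftTr, coeff_sum, coeff_single]
  exact Finset.sum_congr rfl fun i _ => by split_ifs <;> rfl

lemma coeff_liftTr_of_neg (p : Fin n → g) {k : ℤ} (hk : k < 0) : (liftTr p).coeff k = 0 := by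
  rw [coeff_liftTr]
  exact Finset.sum_eq_zero fun i _ => if_neg (by omega)

lemma coeff_liftTr_val (p : Fin n → g) (m : Fin n) : (liftTr p).coeff (m : ℤ) = p m := by
  rw [coeff_liftTr, Finset.sum_eq_single m (fun i _ hi => if_neg (by omega)) (by simp), if_pos rfl]

lemma exists_fin_cast_eq {k : ℤ} (h₀ : 0 ≤ k) (hn : k < n) : ∃ m : Fin n, (m : ℤ) = k :=
  ⟨⟨k.toNat, by omega⟩, by simp [h₀]⟩

lemma BTr_eq_BLau_liftTr (p q : Fin n → g) : BTr κ α p q = BLau κ α (liftTr p) (liftTr q) := by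
  rw [BTr, liftTr, liftTr, BLau_sum_left]
  simp only [BLau_sum_right, BLau_single_single]

lemma BTr_comm (hκ : ∀ x y : g, κ x y = κ y x) (p q : Fin n → g) :
    BTr κ α p q = BTr κ α q p := by
  rw [BTr_eq_BLau_liftTr, BTr_eq_BLau_liftTr, BLau_comm κ α hκ]

lemma coeff_bracketLau_liftTr (p q : Fin n → g) (k : ℤ) :
    (bracketLau (liftTr p) (liftTr q)).coeff k =
      ∑ a : Fin n, ∑ b : Fin n, if k = a + b then ⁅p a, q b⁆ else 0 := by
  let := lieMulStruct g
  change (liftTr p * liftTr q).coeff k = _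
  simp only [liftTr, Finset.sum_mul_sum, single_mul_single, coeff_sum, coeff_single]
  exact Finset.sum_congr rfl fun a _ => Finset.sum_congr rfl fun b _ => by split_ifs <;> rfl

lemma coeff_sub_liftTr_bracketTr (p q : Fin n → g) :
    ∀ k < (n : ℤ), (bracketLau (liftTr p) (liftTr q) - liftTr (bracketTr p q)).coeff k = 0 := by
  intro k hk
  rw [coeff_sub, sub_eq_zero, coeff_bracketLau_liftTr]
  rcases lt_or_ge k 0 with hneg | hnonneg
  · rw [coeff_liftTr_of_neg _ hneg]
    exact Finset.sum_eq_zero fun a _ => Finset.sum_eq_zero fun b _ => if_neg (by omega)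
  · obtain ⟨m, rfl⟩ := exists_fin_cast_eq hnonneg hk
    rw [coeff_liftTr_val, bracketTr]
    exact Finset.sum_congr rfl fun a _ => Finset.sum_congr rfl fun b _ =>
      if_congr (by omega) rfl rfl

lemma BTr_bracketTr (hκ : ∀ x y z : g, κ ⁅x, y⁆ z = κ x ⁅y, z⁆)
    (hα : ∀ k < -(n : ℤ), α.coeff k = 0) (p q r : Fin n → g) :
    BTr κ α (bracketTr p q) r = BTr κ α p (bracketTr q r) := by
  have hlift (s : Fin n → g) : ∀ k < 0, (liftTr s).coeff k = 0 := fun k => coeff_liftTr_of_neg s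
  simp only [BTr_eq_BLau_liftTr]
  calc BLau κ α (liftTr (bracketTr p q)) (liftTr r)
      = BLau κ α (bracketLau (liftTr p) (liftTr q)) (liftTr r) :=
        (BLau_eq_of_sub_left κ α hα (coeff_sub_liftTr_bracketTr p q) (hlift r) (by omega)).symm
    _ = BLau κ α (liftTr p) (bracketLau (liftTr q) (liftTr r)) := BLau_bracketLau κ α hκ _ _ _
    _ = BLau κ α (liftTr p) (liftTr (bracketTr q r)) :=
        BLau_eq_of_sub_right κ α hα (hlift p) (coeff_sub_liftTr_bracketTr q r) (by omega)

end Truncated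

section Form

variable (κ : g →ₗ[F] g →ₗ[F] F) (α : LaurentSeries F)

lemma BB_comm (hκ : ∀ x y : g, κ x y = κ y x) (z w : LL g n) : BB κ α z w = BB κ α w z := by
  rw [BB, BB, BLau_comm κ α hκ, BTr_comm κ α hκ]

lemma BB_bracketLL (hκ : ∀ x y z : g, κ ⁅x, y⁆ z = κ x ⁅y, z⁆)
    (hα : ∀ k < -(n : ℤ), α.coeff k = 0) (z₁ z₂ z₃ : LL g n) :
    BB κ α (bracketLL z₁ z₂) z₃ = BB κ α z₁ (bracketLL z₂ z₃) := by
  simp only [BB, bracketLL, BLau_bracketLau κ α hκ, BTr_bracketTr κ α hκ hα]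

lemma coeff_sub_liftTr_of_mem_Delta {z : LL g n} (hz : z ∈ Delta F g n) :
    ∀ k < (n : ℤ), (z.1 - liftTr z.2).coeff k = 0 := by
  intro k hk
  obtain ⟨hneg, hdiag⟩ := hz
  rw [coeff_sub, sub_eq_zero]
  rcases lt_or_ge k 0 with h | h
  · rw [hneg k h, coeff_liftTr_of_neg _ h]
  · obtain ⟨m, rfl⟩ := exists_fin_cast_eq h hk
    rw [coeff_liftTr_val, hdiag]

lemma BB_eq_zero_of_mem_Delta (hα : ∀ k < -(n : ℤ), α.coeff k = 0) {z w : LL g n}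
    (hz : z ∈ Delta F g n) (hw : w ∈ Delta F g n) : BB κ α z w = 0 := by
  rw [BB, BTr_eq_BLau_liftTr, sub_eq_zero]
  calc BLau κ α z.1 w.1 = BLau κ α (liftTr z.2) w.1 :=
        BLau_eq_of_sub_left κ α hα (coeff_sub_liftTr_of_mem_Delta hz) hw.1 (by omega)
    _ = BLau κ α (liftTr z.2) (liftTr w.2) :=
        BLau_eq_of_sub_right κ α hα (fun k => coeff_liftTr_of_neg z.2)
          (coeff_sub_liftTr_of_mem_Delta hw) (by omega)

end Form

theorem stmt4_general (n : ℕ) (κ : g →ₗ[F] g →ₗ[F] F)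
    (hκsymm : ∀ x y : g, κ x y = κ y x)
    (hκinv : ∀ x y z : g, κ ⁅x, y⁆ z = κ x ⁅y, z⁆)
    (α : LaurentSeries F)
    (hαlow : ∀ k : ℤ, k < -(n : ℤ) → α.coeff k = 0) :
    (∀ z w : LL g n, BB κ α z w = BB κ α w z) ∧
    (∀ z₁ z₂ z₃ : LL g n, BB κ α (bracketLL z₁ z₂) z₃ = BB κ α z₁ (bracketLL z₂ z₃)) ∧
    (∀ z ∈ Delta F g n, ∀ w ∈ Delta F g n, BB κ α z w = 0) :=
  ⟨BB_comm κ α hκsymm, BB_bracketLL κ α hκinv hαlow,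
    fun _ hz _ hw => BB_eq_zero_of_mem_Delta κ α hαlow hz hw⟩

/-- On `L(n,α) = g((x)) × g[x]/xⁿg[x]` the bilinear form
`B(a⊗(f,[p]), b⊗(g,[q])) = κ(a,b)·res₀(α(fg−pq))` is symmetric, invariant, and the
diagonal `Δ = {(f,[f]) : f ∈ g[[x]]}` is isotropic. -/
theorem stmt4 (n : ℕ) (κ : g →ₗ[F] g →ₗ[F] F)
    (hκsymm : ∀ x y : g, κ x y = κ y x)
    (hκinv : ∀ x y z : g, κ ⁅x, y⁆ z = κ x ⁅y, z⁆)
    (hκnd : ∀ x : g, (∀ y : g, κ x y = 0) → x = 0)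
    (α : LaurentSeries F)
    (hα1 : α.coeff (-(n : ℤ)) = 1)
    (hαlow : ∀ k : ℤ, k < -(n : ℤ) → α.coeff k = 0) :
    (∀ z w : LL g n, BB κ α z w = BB κ α w z) ∧
    (∀ z₁ z₂ z₃ : LL g n, BB κ α (bracketLL z₁ z₂) z₃ = BB κ α z₁ (bracketLL z₂ z₃)) ∧
    (∀ z ∈ Delta F g n, ∀ w ∈ Delta F g n, BB κ α z w = 0) :=
  stmt4_general n κ hκsymm hκinv α hαlow

end ManinCore
end

section
/- Let n ≥ 0 and s(x) = ∑_{k≥0} s_k x^k ∈ F[[x]]^×. Define w_{k,i} ∈ L(n,α) = g((x)) ⊕ g[x]/x^n g[x] by w_{k,i} = b_i·(0, −x^{(n-1)-k}) for 0 ≤ k ≤ n−1 and w_{k,i} = b_i·(x^{(n-1)-k}, 0) for k ≥ n, where {b_i} is a κ-orthonormal basis of g. Then with respect to the bilinear form B with functional t(f,[p]) = res_0(α·(f−p)) where α(x) = 1/(x^n s(x)) + (terms making x^n α ∈ F[[x]]^×), one has: B(s·w_{k,i}, b_j·(y^ℓ,[y^ℓ])) = δ_{ij} δ_{kℓ}, i.e.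 the elements s·w_{k,i} form a system dual to the monomial basis b_j(y^ℓ,[y^ℓ]) of the diagonal. -/
/-!
Multiplying by `s` and pairing with a diagonal monomial collapses `B` to one coefficient,
`B(s·w_{k,i}, b_j(y^ℓ,[y^ℓ])) = κ(b_i, b_j) · (α s)_{k-n-ℓ}`, and `α s = x^{-n}` turns this into
the Kronecker deltas. For `k ≥ n` the pairing is a residue of a product of Laurent series. For
`k < n` it is a finite sum over the truncated part `m < n` (the signs in `w_{k,i}` and in `B`
cancel), and this finite sum is already the full coefficient of `α s`: `α` has no terms below
`x^{-n}` and `s` none below `x^0`. For the same reason both sides vanish when `k < n ≤ ℓ`.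
-/

noncomputable section ManinCore

open scoped BigOperators
open HahnSeries

variable {F : Type} [Field F] {g : Type} [LieRing g] [LieAlgebra F g] {d n : ℕ}

namespace HahnSeries

section Coefficients

variable {Γ R : Type*} [AddCommGroup Γ] [LinearOrder Γ] [IsOrderedAddMonoid Γ]
  [NonUnitalNonAssocSemiring R]

theorem coeff_mul_eq_finsum (x y : HahnSeries Γ R) (c : Γ) :
    (x * y).coeff c = ∑ᶠ i, x.coeff i * y.coeff (c - i) := by
  classical
  have hsupp : (Function.support fun i => x.coeff i * y.coeff (c - i)) ⊆
      ((Finset.antidiagonal x.isPWO_support y.isPWO_support c).image Prod.fst : Set Γ) := by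
    intro i hi
    refine Finset.mem_image.mpr ⟨(i, c - i), Finset.mem_antidiagonal.mpr
      ⟨left_ne_zero_of_mul hi, right_ne_zero_of_mul hi, add_sub_cancel i c⟩, rfl⟩
  rw [finsum_eq_finsetSum_of_support_subset _ hsupp, coeff_mul, Finset.sum_image]
  · refine Finset.sum_congr rfl fun ij hij => ?_
    rw [← (Finset.mem_antidiagonal.mp hij).2.2, add_sub_cancel_left]
  · intro p hp q hq hpq
    have hp' := (Finset.mem_antidiagonal.mp hp).2.2
    have hq' := (Finset.mem_antidiagonal.mp hq).2.2
    exact Prod.ext hpq (add_left_cancel (hpq ▸ hp'.trans hq'.symm))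

end Coefficients

section IntCoefficients

variable {R : Type*} [NonUnitalNonAssocSemiring R] {x y : HahnSeries ℤ R}

theorem coeff_mul_eq_zero_of_lt {a b c : ℤ} (hx : ∀ i < a, x.coeff i = 0)
    (hy : ∀ j < b, y.coeff j = 0) (hc : c < a + b) : (x * y).coeff c = 0 := by
  rw [coeff_mul_eq_finsum]
  refine finsum_eq_zero_of_forall_eq_zero fun i => ?_
  rcases lt_or_ge i a with hi | hi
  · rw [hx i hi, zero_mul]
  · rw [hy (c - i) (by omega), mul_zero]

theorem coeff_mul_eq_sum_fin {N : ℕ} (hx : ∀ i < -(N : ℤ), x.coeff i = 0)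
    (hy : ∀ j < 0, y.coeff j = 0) {c d : ℤ} (hd : d ≤ -1) (hcd : c ≤ d) :
    (x * y).coeff c = ∑ m : Fin N, x.coeff (d - m) * y.coeff (c - d + m) := by
  have hinj : Function.Injective fun m : Fin N => d - (m : ℤ) := fun m m' h => by
    simp only [sub_right_inj, Nat.cast_inj] at h
    exact Fin.ext h
  have hsupp : (Function.support fun i => x.coeff i * y.coeff (c - i)) ⊆
      (Finset.univ.map ⟨_, hinj⟩ : Set ℤ) := by
    intro i hi
    have hi₁ : -(N : ℤ) ≤ i := not_lt.mp fun h => left_ne_zero_of_mul hi (hx i h)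
    have hi₂ : i ≤ c := not_lt.mp fun h => right_ne_zero_of_mul hi (hy _ (by omega))
    refine Finset.mem_map.mpr ⟨⟨(d - i).toNat, by omega⟩, Finset.mem_univ _, ?_⟩
    simp only [Function.Embedding.coeFn_mk]
    omega
  rw [coeff_mul_eq_finsum, finsum_eq_finsetSum_of_support_subset _ hsupp, Finset.sum_map]
  refine Finset.sum_congr rfl fun m _ => ?_
  simp only [Function.Embedding.coeFn_mk, sub_sub_eq_add_sub, add_sub_right_comm]

end IntCoefficients

theorem ofPowerSeries_coeff_of_neg {R : Type*} [Semiring R] (s : PowerSeries R) {j : ℤ}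
    (hj : j < 0) : (ofPowerSeries ℤ R s).coeff j = 0 := by
  rw [PowerSeries.coeff_coe, if_pos hj]

end HahnSeries

theorem coeff_psSmulLau_single (s : PowerSeries F) (a : ℤ) (w : g) (m : ℤ) :
    (psSmulLau s (single a w)).coeff m = (ofPowerSeries ℤ F s).coeff (m - a) • w := by
  rw [psSmulLau,
    HahnModule.coeff_smul_right (Set.isPWO_singleton a) (by simpa using support_single_subset),
    Finset.sum_eq_single (m - a, a)]
  · simp
  · rintro ⟨i, j⟩ hij hne
    obtain ⟨-, hj, hij⟩ := (Finset.mem_vaddAntidiagonal _ _).mp hij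
    have hj : j = a := hj
    have hij : i + j = m := hij
    exact absurd (Prod.ext (by omega) hj) hne
  · intro h
    by_cases hs : (ofPowerSeries ℤ F s).coeff (m - a) = 0
    · simp [hs]
    exact absurd ((Finset.mem_vaddAntidiagonal _ _).mpr
      ⟨by simpa using hs, by simp, by simp⟩) h

theorem BLau_psSmulLau_single (κ : g →ₗ[F] g →ₗ[F] F) (α : LaurentSeries F)
    (s : PowerSeries F) (a l : ℤ) (w v : g) :
    BLau κ α (psSmulLau s (single a w)) (single l v)
      = (α * ofPowerSeries ℤ F s).coeff (-1 - l - a) * κ w v := by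
  have hinner : ∀ i : ℤ, ∑ᶠ j : ℤ, α.coeff i *
      κ ((psSmulLau s (single a w)).coeff j) ((single l v).coeff (-1 - i - j))
        = α.coeff i * (ofPowerSeries ℤ F s).coeff (-1 - l - a - i) * κ w v := by
    intro i
    rw [finsum_eq_single _ (-1 - i - l), coeff_psSmulLau_single,
      show -1 - i - (-1 - i - l) = l by ring, coeff_single_same, map_smul,
      LinearMap.smul_apply, smul_eq_mul, mul_assoc]
    · ring_nf
    · intro j hj
      rw [coeff_single_of_ne (by omega), map_zero, mul_zero]
  rw [BLau, finsum_congr hinner, coeff_mul_eq_finsum, finsum_mul]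

/-- `w x^a` in `g[x]/x^n g[x]`; it is `0` when `n ≤ a`. -/
def truncMono (a : ℕ) (w : g) : Fin n → g := fun m => if (m : ℕ) = a then w else 0

theorem psSmulTr_truncMono_apply (s : PowerSeries F) {a : ℕ} (ha : a < n) (w : g) (m : Fin n) :
    psSmulTr s (truncMono a w) m = (ofPowerSeries ℤ F s).coeff ((m : ℤ) - a) • w := by
  rw [psSmulTr, Finset.sum_eq_single ⟨a, ha⟩, truncMono, if_pos rfl, PowerSeries.coeff_coe]
  · dsimp only
    split_ifs with h₁ h₂ h₂
    · omega
    · rw [show ((m : ℤ) - a).natAbs = m - a by omega]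
    · rw [zero_smul]
    · omega
  · intro j _ hj
    rw [truncMono, if_neg (fun h => hj (Fin.ext h)), smul_zero, ite_self]
  · exact fun h => absurd (Finset.mem_univ _) h

theorem truncMono_of_le {a : ℕ} (ha : n ≤ a) (w : g) : (truncMono a w : Fin n → g) = 0 :=
  funext fun m => if_neg (by omega)

theorem BTr_truncMono_right (κ : g →ₗ[F] g →ₗ[F] F) (α : LaurentSeries F) (p : Fin n → g)
    {l : ℕ} (hl : l < n) (v : g) :
    BTr κ α p (truncMono l v) = ∑ m : Fin n, α.coeff (-1 - m - l) * κ (p m) v := by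
  simp only [BTr, truncMono, apply_ite (κ _), map_zero, mul_ite, mul_zero]
  refine Finset.sum_congr rfl fun m _ => ?_
  rw [Fintype.sum_eq_single ⟨l, hl⟩ fun x hx => if_neg fun h => hx (Fin.ext h), if_pos rfl]

theorem BTr_psSmulTr_truncMono (κ : g →ₗ[F] g →ₗ[F] F) {α : LaurentSeries F}
    (hα : ∀ i < -(n : ℤ), α.coeff i = 0) (s : PowerSeries F) {a l : ℕ} (ha : a < n)
    (hl : l < n) (w v : g) :
    BTr κ α (psSmulTr s (truncMono a w)) (truncMono l v : Fin n → g)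
      = (α * ofPowerSeries ℤ F s).coeff (-1 - l - a) * κ w v := by
  rw [BTr_truncMono_right κ α _ hl, coeff_mul_eq_sum_fin hα
    (fun j => ofPowerSeries_coeff_of_neg s) (d := -1 - l) (by omega) (by omega), Finset.sum_mul]
  refine Finset.sum_congr rfl fun m _ => ?_
  rw [psSmulTr_truncMono_apply s ha, map_smul, LinearMap.smul_apply, smul_eq_mul, mul_assoc]
  ring_nf

theorem BB_psSmulLL_wElt_diagMono (κ : g →ₗ[F] g →ₗ[F] F) {α : LaurentSeries F}
    (hα : ∀ i < -(n : ℤ), α.coeff i = 0) (s : PowerSeries F) (b : Fin d → g) (k l : ℕ)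
    (i j : Fin d) :
    BB κ α (psSmulLL s (wElt g n b k i)) (diagMono b l j : LL g n)
      = (α * ofPowerSeries ℤ F s).coeff ((k : ℤ) - n - l) * κ (b i) (b j) := by
  have hdiag : (diagMono b l j : LL g n) = (single (l : ℤ) (b j), truncMono l (b j)) := rfl
  rcases lt_or_ge k n with hk | hk
  · have hw : wElt g n b k i = (0, truncMono (n - 1 - k) (-(b i))) := if_pos hk
    have hLau : BLau κ α (psSmulLau s 0) (single (l : ℤ) (b j)) = 0 := by
      simp [BLau, psSmulLau]
    rw [BB, psSmulLL, hw, hdiag, hLau, zero_sub]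
    rcases lt_or_ge l n with hl | hl
    · rw [BTr_psSmulTr_truncMono κ hα s (by omega) hl, map_neg, LinearMap.neg_apply, mul_neg,
        neg_neg, show -1 - (l : ℤ) - ((n - 1 - k : ℕ) : ℤ) = k - n - l by omega]
    · rw [truncMono_of_le hl, coeff_mul_eq_zero_of_lt hα
        (fun j => ofPowerSeries_coeff_of_neg s) (b := 0) (by omega)]
      simp [BTr]
  · have hw : wElt g n b k i = (single ((n : ℤ) - 1 - k) (b i), 0) := if_neg (by omega)
    have hTr : BTr κ α (psSmulTr s (0 : Fin n → g)) (truncMono l (b j)) = 0 := by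
      simp [BTr, psSmulTr]
    rw [BB, psSmulLL, hw, hdiag, hTr, sub_zero, BLau_psSmulLau_single]
    ring_nf

theorem stmt5_general (n : ℕ) (b : Module.Basis (Fin d) F g) (κ : g →ₗ[F] g →ₗ[F] F)
    (horth : ∀ i j : Fin d, κ (b i) (b j) = if i = j then 1 else 0)
    (α : LaurentSeries F) (s : PowerSeries F)
    (hαlow : ∀ k : ℤ, k < -(n : ℤ) → α.coeff k = 0)
    (hαs : α * HahnSeries.ofPowerSeries ℤ F s = HahnSeries.single (-(n : ℤ)) 1) :
    ∀ (k l : ℕ) (i j : Fin d),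
      BB κ α (psSmulLL s (wElt g n (⇑b) k i)) ((diagMono (⇑b) l j : LL g n))
        = if k = l ∧ i = j then 1 else 0 := by
  intro k l i j
  have hkl : (k : ℤ) - n - l = -n ↔ k = l := by omega
  rw [BB_psSmulLL_wElt_diagMono κ hαlow s b k l i j, hαs, coeff_single, horth,
    ite_zero_mul_ite_zero, mul_one]
  simp only [hkl]

/-- With `s = 1/(xⁿα(x)) ∈ F[[x]]ˣ` (i.e. `α·s = x⁻ⁿ`), the rescaled
elements `s·w_{k,i} ∈ L(n,α)` form a system dual to the diagonal monomials
`b_j(y^ℓ,[y^ℓ])`: `B(s·w_{k,i}, b_j(y^ℓ,[y^ℓ])) = δ_{ij}δ_{kℓ}`. -/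
theorem stmt5 (n : ℕ) (b : Module.Basis (Fin d) F g) (κ : g →ₗ[F] g →ₗ[F] F)
    (hκsymm : ∀ x y : g, κ x y = κ y x)
    (hκinv : ∀ x y z : g, κ ⁅x, y⁆ z = κ x ⁅y, z⁆)
    (horth : ∀ i j : Fin d, κ (b i) (b j) = if i = j then 1 else 0)
    (α : LaurentSeries F) (s : PowerSeries F)
    (hs0 : PowerSeries.constantCoeff s ≠ 0)
    (hαlow : ∀ k : ℤ, k < -(n : ℤ) → α.coeff k = 0)
    (hαs : α * HahnSeries.ofPowerSeries ℤ F s = HahnSeries.single (-(n : ℤ)) 1) :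
    ∀ (k l : ℕ) (i j : Fin d),
      BB κ α (psSmulLL s (wElt g n (⇑b) k i)) ((diagMono (⇑b) l j : LL g n))
        = if k = l ∧ i = j then 1 else 0 :=
  stmt5_general n b κ horth α s hαlow hαs

end ManinCore
end

section
/- Let L be a Lie algebra with invariant nondegenerate symmetric bilinear form B, W ⊂ L a Lagrangian subspace with L = g[[x]] ⊕ W, and s = ∑_i a_i ⊗ b^i ∈ (g⊗g)[[x,y]] a skew-symmetric tensor (viewing a_i, b^i ∈ g[[x]]). Then the twisted subspace W_s := { ∑_i B(b^i, w)a_i − w : w ∈ W } is again Lagrangian with respect to B and complementary to g[[x]]. -/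
/-!
Since `σ` takes values in `G`, the map `w ↦ σ w - w` shifts `W` only along `G`, so its image
`W_s` is still a complement of `G`. Isotropy of `W_s` is a two-line computation: the `G`–`G` and
`W`–`W` terms vanish and the two cross terms cancel by skew-symmetry of `σ`. For maximality, an
element of `G` orthogonal to `W_s` is orthogonal to `W` (its pairing with `σ w ∈ G` vanishes),
hence lies in `G ∩ W = 0`; the modular law then forces `W_s^⊥ = W_s`, because both are
complements of `G` and one contains the other.
-/

namespace Submodule

variable {R M : Type*} [Ring R] [AddCommGroup M] [Module R M]

theorem isCompl_map_sub_id {G W : Submodule R M} (hc : IsCompl G W) {σ : M →ₗ[R] M}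
    (hσ : ∀ x, σ x ∈ G) : IsCompl G (W.map (σ - LinearMap.id)) := by
  constructor
  · refine disjoint_def.2 ?_
    rintro _ hxG ⟨w, hw, rfl⟩
    have hwG : w ∈ G := by simpa using G.sub_mem (hσ w) hxG
    simp [disjoint_def.1 hc.disjoint w hwG hw]
  · refine codisjoint_iff.2 (top_unique ?_)
    rw [← hc.sup_eq_top]
    refine sup_le le_sup_left fun w hw => ?_
    have hw' : σ w - (σ w - w) = w := sub_sub_cancel _ _
    rw [← hw']
    exact sub_mem (mem_sup_left (hσ w)) (mem_sup_right ⟨w, hw, rfl⟩)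

end Submodule

namespace LinearMap.BilinForm

variable {R M : Type*} [CommRing R] [AddCommGroup M] [Module R M] {B : LinearMap.BilinForm R M}
  {G W : Submodule R M} {σ : M →ₗ[R] M}

theorem map_sub_id_le_orthogonal (hB : ∀ x y, B x y = B y x) (hG : G ≤ B.orthogonal G)
    (hW : W ≤ B.orthogonal W) (hσ : ∀ x, σ x ∈ G) (hskew : ∀ x y, B (σ x) y = -B (σ y) x) :
    W.map (σ - LinearMap.id) ≤ B.orthogonal (W.map (σ - LinearMap.id)) := by
  rintro _ ⟨w, hw, rfl⟩
  refine mem_orthogonal_iff.2 ?_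
  rintro _ ⟨w', hw', rfl⟩
  have hσσ : B (σ w') (σ w) = 0 := mem_orthogonal_iff.1 (hG (hσ w)) _ (hσ w')
  have hww : B w' w = 0 := mem_orthogonal_iff.1 (hW hw) _ hw'
  simp only [LinearMap.sub_apply, LinearMap.id_apply, map_sub]
  rw [hσσ, hww, hB w' (σ w), hskew w w']
  ring

theorem disjoint_orthogonal_map_sub_id (hc : IsCompl G W) (hG : G ≤ B.orthogonal G)
    (hW : B.orthogonal W ≤ W) (hσ : ∀ x, σ x ∈ G) :
    Disjoint G (B.orthogonal (W.map (σ - LinearMap.id))) := by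
  refine Submodule.disjoint_def.2 fun v hvG hv => ?_
  have hvW : v ∈ W := hW <| mem_orthogonal_iff.2 fun w hw => by
    have hσv : B (σ w) v = 0 := mem_orthogonal_iff.1 (hG hvG) _ (hσ w)
    simpa [hσv] using mem_orthogonal_iff.1 hv _ ⟨w, hw, rfl⟩
  exact Submodule.disjoint_def.1 hc.disjoint v hvG hvW

theorem map_sub_id_eq_orthogonal (hB : ∀ x y, B x y = B y x) (hc : IsCompl G W)
    (hG : G = B.orthogonal G) (hW : W = B.orthogonal W) (hσ : ∀ x, σ x ∈ G)
    (hskew : ∀ x y, B (σ x) y = -B (σ y) x) :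
    W.map (σ - LinearMap.id) = B.orthogonal (W.map (σ - LinearMap.id)) := by
  have hcompl := Submodule.isCompl_map_sub_id hc hσ
  have hdisj := disjoint_orthogonal_map_sub_id hc hG.le hW.ge hσ
  refine eq_of_le_of_inf_le_of_sup_le (z := G)
    (map_sub_id_le_orthogonal hB hG.le hW.le hσ hskew) ?_ ?_
  · rw [inf_comm, hdisj.eq_bot]
    exact bot_le
  · rw [hcompl.symm.sup_eq_top]
    exact le_top

end LinearMap.BilinForm

theorem stmt11_general {F : Type} [Field F] {L : Type} [LieRing L] [LieAlgebra F L]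
    (B : LinearMap.BilinForm F L)
    (hsymm : ∀ u v : L, B u v = B v u)
    (G W : Submodule F L)
    (hc : IsCompl G W)
    (hG : G = B.orthogonal G)
    (hW : W = B.orthogonal W)
    (σ : L →ₗ[F] L)
    (hrange : ∀ z : L, σ z ∈ G)
    (hskew : ∀ u v : L, B (σ u) v = -B (σ v) u) :
    Submodule.map (σ - LinearMap.id) W
        = B.orthogonal (Submodule.map (σ - LinearMap.id) W)
      ∧ IsCompl G (Submodule.map (σ - LinearMap.id) W) :=
  ⟨LinearMap.BilinForm.map_sub_id_eq_orthogonal hsymm hc hG hW hrange hskew,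
    Submodule.isCompl_map_sub_id hc hrange⟩

/-- Let `L` be a Lie algebra with invariant nondegenerate symmetric
bilinear form `B`, let `G` (the copy of `g[[x]]`) and `W` be Lagrangian subspaces with
`L = G ⊕ W`.  A skew-symmetric tensor `s = ∑ aᵢ ⊗ bᵢ ∈ (g⊗g)[[x,y]]` is encoded by
the linear map `σ : L → L`, `w ↦ ∑ᵢ B(bᵢ,w)aᵢ`, with values in `G` and satisfying
`B(σu, v) = −B(σv, u)` (skew-symmetry of `s`).  Then the twisted subspace
`W_s = {σw − w : w ∈ W}` is again Lagrangian and complementary to `G`. -/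
theorem stmt11 {F : Type} [Field F] [CharZero F] {L : Type} [LieRing L] [LieAlgebra F L]
    (B : LinearMap.BilinForm F L)
    (hsymm : ∀ u v : L, B u v = B v u)
    (hinv : ∀ u v w : L, B ⁅u, v⁆ w = B u ⁅v, w⁆)
    (hnd : ∀ u : L, (∀ v : L, B u v = 0) → u = 0)
    (G W : Submodule F L)
    (hc : IsCompl G W)
    (hG : G = B.orthogonal G)
    (hW : W = B.orthogonal W)
    (σ : L →ₗ[F] L)
    (hrange : ∀ z : L, σ z ∈ G)
    (hskew : ∀ u v : L, B (σ u) v = -B (σ v) u) :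
    Submodule.map (σ - LinearMap.id) W
        = B.orthogonal (Submodule.map (σ - LinearMap.id) W)
      ∧ IsCompl G (Submodule.map (σ - LinearMap.id) W) :=
  stmt11_general B hsymm G W hc hG hW σ hrange hskew
end
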